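/- If H first-order stochastically dominates G as cost distributions (G(c) ≥ H(c) for all c), the principal's optimal contract revenue under G need NOT be at least that under H: there exists a 4-action, 4-outcome principal-agent instance and distributions H ≻_FOSD G (G puts mass ε on cost 0 and 1−ε on cost 1; H is a point mass at cost 1) such that the optimal revenue under H is at least 1/2 while the optimal revenue under any limited-liability IC contract under G is strictly less than 1/2, for suitable ε, δ with ε < δ, (1+δ)δ < 1/4, and 7δ + 6ε < 1/2. -/

import Mathlib

/-!
Under `H` the contract paying `1` on outcome `2` makes action `2` a best response of the
unit-cost agent (tied with actions `0` and `1`); it yields reward `1` at expected payment `1/2`.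

Under `G` the zero-cost type can take the unit-cost type's contract and play action `3` for
free, so it must be paid at least what that contract pays on action `3`. If the unit-cost type
takes action `2` with rent `s`, incentive compatibility against action `1` forces its contract
to pay at least `1 - 6s` on outcome `2`, which action `3` produces with probability
`1 - δ - δ²`. The zero-cost type then nets the principal at most `2δ + δ² + 6s`, the
unit-cost type `1/2 - s`, and as `7ε < 1` and `δ` is small the average stays below `1/2`.
Inducing action `0` or `1` yields at most `1/4` from the unit-cost type, and action `3` costs
it `1/δ`, more than the whole reward.
-/

noncomputable section

namespace FOSDCounterexample

variable {δ : ℝ}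

def outcomeDist (δ : ℝ) : Fin 4 → Fin 4 → ℝ :=
  ![![1, 0, 0, 0],
    ![0, 1 - δ / 4, 0, δ / 4],
    ![0, 1 / 2 - δ, 1 / 2, δ],
    ![0, 0, 1 - δ - δ ^ 2, δ + δ ^ 2]]

def effort (δ : ℝ) : Fin 4 → ℝ := ![0, 0, 1 / 2, 1 / δ]

def reward (δ : ℝ) : Fin 4 → ℝ := ![0, 0, 0, 1 / δ]

/-- For `t = reward δ` this is the principal's expected reward under action `b`. -/
def payment (δ : ℝ) (t : Fin 4 → ℝ) (b : Fin 4) : ℝ := ∑ j, t j * outcomeDist δ b j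

section payment

variable (t : Fin 4 → ℝ)

lemma payment_zero : payment δ t 0 = t 0 := by
  simp [payment, outcomeDist, Fin.sum_univ_four]

lemma payment_one : payment δ t 1 = t 1 * (1 - δ / 4) + t 3 * (δ / 4) := by
  simp [payment, outcomeDist, Fin.sum_univ_four]

lemma payment_two : payment δ t 2 = t 1 * (1 / 2 - δ) + t 2 * (1 / 2) + t 3 * δ := by
  simp [payment, outcomeDist, Fin.sum_univ_four]

lemma payment_three : payment δ t 3 = t 2 * (1 - δ - δ ^ 2) + t 3 * (δ + δ ^ 2) := by
  simp [payment, outcomeDist, Fin.sum_univ_four]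

end payment

lemma outcomeDist_nonneg (hδ₀ : 0 ≤ δ) (hδ : δ ≤ 1 / 2) (b j : Fin 4) :
    0 ≤ outcomeDist δ b j := by
  have : 0 ≤ 1 - δ - δ ^ 2 := by nlinarith
  fin_cases b <;> fin_cases j <;> simp [outcomeDist] <;> first | linarith | positivity

lemma payment_nonneg (hδ₀ : 0 ≤ δ) (hδ : δ ≤ 1 / 2) {t : Fin 4 → ℝ} (ht : ∀ j, 0 ≤ t j)
    (b : Fin 4) : 0 ≤ payment δ t b :=
  Finset.sum_nonneg fun j _ => mul_nonneg (ht j) (outcomeDist_nonneg hδ₀ hδ b j)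

lemma payment_reward (hδ : δ ≠ 0) (b : Fin 4) :
    payment δ (reward δ) b = ![0, 1 / 4, 1, 1 + δ] b := by
  fin_cases b <;> simp [reward, payment_zero, payment_one, payment_two, payment_three] <;>
    field_simp

lemma payment_reward_le (hδ : 0 < δ) (b : Fin 4) : payment δ (reward δ) b ≤ 1 + δ := by
  rw [payment_reward hδ.ne']
  fin_cases b <;> simp <;> linarith

lemma payOnTwo_isIC (hδ₀ : 0 < δ) (hδ : δ ≤ 1 / 2) (b : Fin 4) :
    payment δ ![0, 0, 1, 0] b - effort δ b ≤ payment δ ![0, 0, 1, 0] 2 - effort δ 2 := by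
  have hinv : 2 ≤ δ⁻¹ := by rw [le_inv_comm₀ two_pos hδ₀]; linarith
  fin_cases b <;> simp [effort, payment_zero, payment_one, payment_two, payment_three]
  nlinarith

lemma revenue_payOnTwo (hδ : δ ≠ 0) :
    payment δ (reward δ) 2 - payment δ ![0, 0, 1, 0] 2 = 1 / 2 := by
  simp [payment_reward hδ, payment_two]
  norm_num

lemma payment_three_ge_of_rent (hδ₀ : 0 ≤ δ) (hδ : δ ≤ 1 / 2) {t : Fin 4 → ℝ}
    (ht : ∀ j, 0 ≤ t j) (h : payment δ t 1 ≤ payment δ t 2 - 1 / 2) :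
    (1 - 6 * (payment δ t 2 - 1 / 2)) * (1 - δ - δ ^ 2) ≤ payment δ t 3 := by
  have ht₂ : 1 - 6 * (payment δ t 2 - 1 / 2) ≤ t 2 := by
    simp only [payment_one, payment_two] at h ⊢
    linarith [ht 1]
  calc (1 - 6 * (payment δ t 2 - 1 / 2)) * (1 - δ - δ ^ 2)
      ≤ t 2 * (1 - δ - δ ^ 2) := mul_le_mul_of_nonneg_right ht₂ (by nlinarith)
    _ ≤ payment δ t 3 := by rw [payment_three]; nlinarith [ht 3]

lemma weighted_lt_of_le {ε x y X Y c : ℝ} (hε₀ : 0 ≤ ε) (hε₁ : ε ≤ 1) (hx : x ≤ X) (hy : y ≤ Y)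
    (h : ε * X + (1 - ε) * Y < c) : ε * x + (1 - ε) * y < c := by
  nlinarith

lemma revenue_lt_half_of_action_two {ε x : ℝ} (hε : 0 < ε) (h7ε : 7 * ε ≤ 1) (hδ₀ : 0 < δ)
    (hδ : 2 * δ + δ ^ 2 < 1 / 2) {t : Fin 4 → ℝ} (ht : ∀ j, 0 ≤ t j)
    (hx : x ≤ 1 + δ - payment δ t 3)
    (hIC : ∀ b, payment δ t b - effort δ b ≤ payment δ t 2 - effort δ 2) :
    ε * x + (1 - ε) * (payment δ (reward δ) 2 - payment δ t 2) < 1 / 2 := by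
  have hIR : 1 / 2 ≤ payment δ t 2 := by
    have := hIC 0
    rw [payment_zero, show effort δ 0 = 0 from rfl] at this
    linarith [ht 0, show effort δ 2 = 1 / 2 from rfl]
  have hrent := payment_three_ge_of_rent hδ₀.le (by nlinarith) ht (by simpa [effort] using hIC 1)
  have hrev : payment δ (reward δ) 2 - payment δ t 2 = 1 - payment δ t 2 := by
    simp [payment_reward hδ₀.ne']
  refine weighted_lt_of_le hε.le (by linarith) (hx.trans (sub_le_sub_left hrent _)) hrev.le ?_
  nlinarith [mul_nonneg (by linarith : 0 ≤ 1 - 7 * ε) (sub_nonneg.2 hIR)]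

lemma screening_revenue_lt_half {ε : ℝ} (hε : 0 < ε) (hεδ : ε < δ) (h1 : (1 + δ) * δ < 1 / 4)
    (h2 : 7 * δ + 6 * ε < 1 / 2) {t₀ t₁ : Fin 4 → ℝ} {a₀ a₁ : Fin 4} (ht₁ : ∀ j, 0 ≤ t₁ j)
    (hmimic : payment δ t₁ 3 ≤ payment δ t₀ a₀)
    (hIC : ∀ b, payment δ t₁ b - effort δ b ≤ payment δ t₁ a₁ - effort δ a₁) :
    ε * (payment δ (reward δ) a₀ - payment δ t₀ a₀) +
      (1 - ε) * (payment δ (reward δ) a₁ - payment δ t₁ a₁) < 1 / 2 := by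
  have hδ : 0 < δ := hε.trans hεδ
  have hδ' : δ ≤ 1 / 2 := by nlinarith
  have hε₁ : ε ≤ 1 := by linarith
  have hrev₀ : payment δ (reward δ) a₀ - payment δ t₀ a₀ ≤ 1 + δ - payment δ t₁ 3 := by
    linarith [payment_reward_le hδ a₀]
  have hrev₀' : payment δ (reward δ) a₀ - payment δ t₀ a₀ ≤ 1 + δ := by
    linarith [payment_nonneg hδ.le hδ' ht₁ 3]
  have hεδ' : ε * (1 + δ) < 1 / 4 := by nlinarith
  obtain rfl | rfl | rfl | rfl : a₁ = 0 ∨ a₁ = 1 ∨ a₁ = 2 ∨ a₁ = 3 := by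
    fin_cases a₁ <;> simp
  · have hrev₁ : payment δ (reward δ) 0 - payment δ t₁ 0 ≤ 0 := by
      simp [payment_reward hδ.ne', payment_zero, ht₁ 0]
    exact weighted_lt_of_le hε.le hε₁ hrev₀' hrev₁ (by nlinarith)
  · have hrev₁ : payment δ (reward δ) 1 - payment δ t₁ 1 ≤ 1 / 4 := by
      simp [payment_reward hδ.ne', payment_nonneg hδ.le hδ' ht₁ 1]
    exact weighted_lt_of_le hε.le hε₁ hrev₀' hrev₁ (by nlinarith)
  · exact revenue_lt_half_of_action_two hε (by linarith) hδ (by nlinarith) ht₁ hrev₀ hIC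
  · -- both types are paid at least `1/δ`: the unit-cost type for its effort, the zero-cost
    -- type since it could take that same contract and play action `3`
    have hpay : δ⁻¹ ≤ payment δ t₁ 3 := by
      have := hIC 0
      simp [effort, payment_zero] at this
      linarith [ht₁ 0]
    have hrev₁ : payment δ (reward δ) 3 - payment δ t₁ 3 ≤ 1 + δ - δ⁻¹ := by
      simp [payment_reward hδ.ne']
      linarith
    have hinv : 2 ≤ δ⁻¹ := by rw [le_inv_comm₀ two_pos hδ]; linarith
    exact weighted_lt_of_le hε.le hε₁
      (hrev₀.trans (by linarith : 1 + δ - payment δ t₁ 3 ≤ 1 + δ - δ⁻¹)) hrev₁ (by linarith)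

end FOSDCounterexample

end

/-- revenue non-monotonicity in FOSD: there is a 4-action, 4-outcome
instance and cost distributions `H ≻_FOSD G` (here `G` puts mass `ε` on cost `0` and
`1-ε` on cost `1`; `H` is a point mass at cost `1`) such that the optimal revenue
under `H` is at least `1/2`, while the revenue of every limited-liability IC menu of
contracts under `G` is strictly less than `1/2`. -/
theorem revenue_nonmonotone_in_FOSD
    (ε δ : ℝ) (hε : 0 < ε) (hεδ : ε < δ)
    (h1 : (1 + δ) * δ < 1 / 4) (h2 : 7 * δ + 6 * ε < 1 / 2)
    (F : Fin 4 → Fin 4 → ℝ) (γv rv : Fin 4 → ℝ) (ct : Fin 2 → ℝ)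
    (hF : F = ![![1, 0, 0, 0],
                ![0, 1 - δ / 4, 0, δ / 4],
                ![0, 1 / 2 - δ, 1 / 2, δ],
                ![0, 0, 1 - δ - δ ^ 2, δ + δ ^ 2]])
    (hγ : γv = ![0, 0, 1 / 2, 1 / δ])
    (hr : rv = ![0, 0, 0, 1 / δ])
    (hc : ct = ![0, 1]) :
    -- under H (point mass at cost 1) some contract extracts revenue at least 1/2
    (∃ t : Fin 4 → ℝ, (∀ j, 0 ≤ t j) ∧ ∃ a : Fin 4,
        (∀ b, (∑ j, t j * F b j) - γv b ≤ (∑ j, t j * F a j) - γv a) ∧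
        1 / 2 ≤ (∑ j, rv j * F a j) - ∑ j, t j * F a j) ∧
    -- under G (mass ε on cost 0, mass 1-ε on cost 1) every limited-liability IC menu
    -- earns strictly less than 1/2
    (∀ (t : Fin 2 → Fin 4 → ℝ) (a : Fin 2 → Fin 4),
        (∀ k j, 0 ≤ t k j) →
        (∀ k k' : Fin 2, ∀ b : Fin 4,
          (∑ j, t k' j * F b j) - γv b * ct k ≤
            (∑ j, t k j * F (a k) j) - γv (a k) * ct k) →
        ε * ((∑ j, rv j * F (a 0) j) - ∑ j, t 0 j * F (a 0) j) +
            (1 - ε) * ((∑ j, rv j * F (a 1) j) - ∑ j, t 1 j * F (a 1) j) < 1 / 2) := by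
  open FOSDCounterexample in
  have hδ : 0 < δ := hε.trans hεδ
  have hδ' : δ ≤ 1 / 2 := by nlinarith
  obtain rfl : F = outcomeDist δ := hF
  obtain rfl : γv = effort δ := hγ
  obtain rfl : rv = reward δ := hr
  subst hc
  refine ⟨⟨![0, 0, 1, 0], fun j => by fin_cases j <;> simp, 2, payOnTwo_isIC hδ hδ',
    (revenue_payOnTwo hδ.ne').ge⟩, fun t a ht hIC => ?_⟩
  have hmimic : payment δ (t 1) 3 ≤ payment δ (t 0) (a 0) := by simpa [payment] using hIC 0 1 3
  exact screening_revenue_lt_half hε hεδ h1 h2 (ht 1) hmimic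
    (fun b => by simpa [payment] using hIC 1 1 b)
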